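/- arXiv:2209.11989 — 3 statements merged into one kernel-verified Lean document; each statement's English description precedes it below -/
import Mathlib

section
/- Let H be a real Hilbert space, A : H → H r-strongly monotone with r > 0, and B : H → 2^H a monotone set-valued map. Let λ, λ' > 0, c ≥ 0, and let w, y ∈ H satisfy (1/λ)(w − y − λAw) ∈ By and λ'‖Aw − Ay‖ ≤ c‖w − y‖. Then for every p ∈ H with −Ap ∈ Bp, ‖y − λ(Ay − Aw) − p‖² ≤ ‖w − p‖² − (1 − c²λ²/λ'²)‖w − y‖² − 2rλ‖y − p‖². -/
/-!
Monotonicity of `B` at the resolvent point `y` and at the zero `p` gives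
`0 ≤ ⟪w - y - λ(Aw - Ap), y - p⟫`, strong monotonicity of `A` gives `2λr‖y - p‖² ≤ 2λ⟪Ay - Ap, y - p⟫`,
and the step-size condition bounds `λ²‖Ay - Aw‖²`. These are exactly the three non-trivial terms
of a Hilbert-space identity expressing `‖y - λ(Ay - Aw) - p‖²` through `‖w - p‖²` and `‖w - y‖²`.
-/

open scoped RealInnerProductSpace

section InnerProductSpace

variable {H : Type*} [NormedAddCommGroup H] [InnerProductSpace ℝ H]

theorem norm_forwardBackward_sub_sq (w y p a b q : H) (lam : ℝ) :
    ‖y - lam • (b - a) - p‖ ^ 2 =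
      ‖w - p‖ ^ 2 - ‖w - y‖ ^ 2 - 2 * ⟪w - y - lam • (a - q), y - p⟫
        - 2 * lam * ⟪b - q, y - p⟫ + lam ^ 2 * ‖b - a‖ ^ 2 := by
  have hwp : w - p = (w - y) + (y - p) := by abel
  have hlhs : y - lam • (b - a) - p = (y - p) - lam • (b - a) := by abel
  rw [hwp, hlhs, norm_add_sq_real, norm_sub_sq_real, norm_smul, mul_pow, Real.norm_eq_abs, sq_abs]
  simp only [inner_sub_left, inner_sub_right, real_inner_smul_right, real_inner_comm]
  ring

theorem inner_resolvent_sub_nonneg {B : H → Set H}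
    (hBmono : ∀ x y u v : H, u ∈ B x → v ∈ B y → 0 ≤ ⟪u - v, x - y⟫)
    {lam : ℝ} (hlam : 0 < lam) {w y p a q : H}
    (hres : (1 / lam) • (w - y - lam • a) ∈ B y) (hp : -q ∈ B p) :
    0 ≤ ⟪w - y - lam • (a - q), y - p⟫ := by
  have hscale : w - y - lam • (a - q) = lam • ((1 / lam) • (w - y - lam • a) - -q) := by
    rw [sub_neg_eq_add, smul_add, smul_smul, mul_one_div_cancel hlam.ne', one_smul, smul_sub]
    abel
  rw [hscale, real_inner_smul_left]
  exact mul_nonneg hlam.le (hBmono y p _ _ hres hp)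

end InnerProductSpace

theorem sq_mul_sq_le_of_mul_le {lam lam' c x z : ℝ} (hlam' : 0 < lam') (hx : 0 ≤ x)
    (h : lam' * x ≤ c * z) :
    lam ^ 2 * x ^ 2 ≤ c ^ 2 * lam ^ 2 / lam' ^ 2 * z ^ 2 := by
  have hx' : x ≤ c * z / lam' := by rwa [le_div_iff₀ hlam', mul_comm]
  calc lam ^ 2 * x ^ 2 ≤ lam ^ 2 * (c * z / lam') ^ 2 := by gcongr
    _ = c ^ 2 * lam ^ 2 / lam' ^ 2 * z ^ 2 := by field_simp

theorem stmt_3_general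
    {H : Type*} [NormedAddCommGroup H] [InnerProductSpace ℝ H]
    (A : H → H) (B : H → Set H) (r : ℝ)
    (hAstrong : ∀ x y : H, r * ‖x - y‖ ^ 2 ≤ ⟪A x - A y, x - y⟫)
    (hBmono : ∀ x y u v : H, u ∈ B x → v ∈ B y → 0 ≤ ⟪u - v, x - y⟫)
    (lam lam' c : ℝ) (hlam : 0 < lam) (hlam' : 0 < lam')
    (w y : H)
    (hres : (1 / lam) • (w - y - lam • A w) ∈ B y)
    (hstepsize : lam' * ‖A w - A y‖ ≤ c * ‖w - y‖) :
    ∀ p : H, -A p ∈ B p →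
      ‖y - lam • (A y - A w) - p‖ ^ 2 ≤
        ‖w - p‖ ^ 2 - (1 - c ^ 2 * lam ^ 2 / lam' ^ 2) * ‖w - y‖ ^ 2
          - 2 * r * lam * ‖y - p‖ ^ 2 := by
  intro p hp
  have hB := inner_resolvent_sub_nonneg hBmono hlam hres hp
  have hA := mul_le_mul_of_nonneg_left (hAstrong y p) (by positivity : (0 : ℝ) ≤ 2 * lam)
  have hstep : lam ^ 2 * ‖A y - A w‖ ^ 2 ≤ c ^ 2 * lam ^ 2 / lam' ^ 2 * ‖w - y‖ ^ 2 := by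
    rw [norm_sub_rev]
    exact sq_mul_sq_le_of_mul_le hlam' (norm_nonneg _) hstepsize
  rw [norm_forwardBackward_sub_sq w y p (A w) (A y) (A p) lam]
  linarith

/-- Lemma 3.2(ii), Case II: the one-step estimate when `A` is `r`-strongly monotone. -/
theorem stmt_3
    {H : Type*} [NormedAddCommGroup H] [InnerProductSpace ℝ H] [CompleteSpace H]
    (A : H → H) (B : H → Set H) (r : ℝ) (hr : 0 < r)
    (hAstrong : ∀ x y : H, r * ‖x - y‖ ^ 2 ≤ ⟪A x - A y, x - y⟫)
    (hBmono : ∀ x y u v : H, u ∈ B x → v ∈ B y → 0 ≤ ⟪u - v, x - y⟫)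
    (lam lam' c : ℝ) (hlam : 0 < lam) (hlam' : 0 < lam') (hc : 0 ≤ c)
    (w y : H)
    (hres : (1 / lam) • (w - y - lam • A w) ∈ B y)
    (hstepsize : lam' * ‖A w - A y‖ ≤ c * ‖w - y‖) :
    ∀ p : H, -A p ∈ B p →
      ‖y - lam • (A y - A w) - p‖ ^ 2 ≤
        ‖w - p‖ ^ 2 - (1 - c ^ 2 * lam ^ 2 / lam' ^ 2) * ‖w - y‖ ^ 2
          - 2 * r * lam * ‖y - p‖ ^ 2 :=
  stmt_3_general A B r hAstrong hBmono lam lam' c hlam hlam' w y hres hstepsize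
end

section
/- Let H be a real Hilbert space, C ⊆ H nonempty, closed and convex, and A : H → H r-strongly pseudomonotone with r > 0. Let λ, λ' > 0, c ≥ 0, let w ∈ H, and let y ∈ C satisfy ⟨w − λAw − y, u − y⟩ ≤ 0 for all u ∈ C (i.e. y = P_C(w − λAw)), together with λ'‖Aw − Ay‖ ≤ c‖w − y‖. Then for every p ∈ C with ⟨Ap, u − p⟩ ≥ 0 for all u ∈ C, one has ‖y − λ(Ay − Aw) − p‖² ≤ ‖w − p‖² − (1 − c²λ²/λ'²)‖w − y‖² − 2rλ‖y − p‖². -/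
open scoped RealInnerProductSpace

/-!
Expand `‖(y - p) - λ (Ay - Aw)‖²` around `‖w - p‖² = ‖w - y‖² + 2⟪w - y, y - p⟫ + ‖y - p‖²`.
The cross term `λ⟪Aw, y - p⟫` is dominated by `⟪w - y, y - p⟫` (projection inequality tested
at `p`), the term `λ⟪Ay, y - p⟫` dominates `rλ‖y - p‖²` (strong pseudomonotonicity, since `p`
solves the variational inequality and `y ∈ C`), and `λ²‖Ay - Aw‖²` is controlled by the
step-size rule.
-/

lemma sq_le_of_mul_le_mul {a b c μ : ℝ} (hμ : 0 < μ) (ha : 0 ≤ a) (h : μ * a ≤ c * b) :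
    a ^ 2 ≤ c ^ 2 / μ ^ 2 * b ^ 2 := by
  have hsq : (μ * a) ^ 2 ≤ (c * b) ^ 2 := pow_le_pow_left₀ (by positivity) h 2
  rw [div_mul_eq_mul_div, le_div_iff₀ (by positivity)]
  linarith

section InnerProductSpace

variable {H : Type*} [NormedAddCommGroup H] [InnerProductSpace ℝ H]

lemma smul_inner_le_inner_of_inner_sub_smul_le_zero {w y p v : H} {lam : ℝ}
    (h : ⟪w - lam • v - y, p - y⟫ ≤ 0) : lam * ⟪v, y - p⟫ ≤ ⟪w - y, y - p⟫ := by
  have hsplit : w - lam • v - y = (w - y) - lam • v := by abel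
  rw [hsplit, inner_sub_left, real_inner_smul_left, ← neg_sub y p, inner_neg_right,
    inner_neg_right] at h
  linarith

lemma norm_sub_smul_sub_sq (y p d : H) (lam : ℝ) :
    ‖y - lam • d - p‖ ^ 2 = ‖y - p‖ ^ 2 - 2 * lam * ⟪d, y - p⟫ + lam ^ 2 * ‖d‖ ^ 2 := by
  rw [show y - lam • d - p = (y - p) - lam • d by abel, norm_sub_sq_real, norm_smul,
    real_inner_smul_right, real_inner_comm, Real.norm_eq_abs, mul_pow, sq_abs]
  ring

end InnerProductSpace

theorem stmt_12_general
    {H : Type*} [NormedAddCommGroup H] [InnerProductSpace ℝ H]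
    (C : Set H)
    (A : H → H) (r : ℝ)
    (hAstrpseudo : ∀ x y : H, 0 ≤ ⟪A y, x - y⟫ → r * ‖x - y‖ ^ 2 ≤ ⟪A x, x - y⟫)
    (lam lam' c : ℝ) (hlam : 0 < lam) (hlam' : 0 < lam')
    (w y : H) (hyC : y ∈ C)
    (hproj : ∀ u ∈ C, ⟪w - lam • A w - y, u - y⟫ ≤ 0)
    (hstepsize : lam' * ‖A w - A y‖ ≤ c * ‖w - y‖) :
    ∀ p : H, p ∈ C → (∀ u ∈ C, 0 ≤ ⟪A p, u - p⟫) →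
      ‖y - lam • (A y - A w) - p‖ ^ 2 ≤
        ‖w - p‖ ^ 2 - (1 - c ^ 2 * lam ^ 2 / lam' ^ 2) * ‖w - y‖ ^ 2
          - 2 * r * lam * ‖y - p‖ ^ 2 := by
  intro p hpC hpVI
  have hstrong : r * ‖y - p‖ ^ 2 ≤ ⟪A y, y - p⟫ := hAstrpseudo y p (hpVI y hyC)
  have hprojp : lam * ⟪A w, y - p⟫ ≤ ⟪w - y, y - p⟫ :=
    smul_inner_le_inner_of_inner_sub_smul_le_zero (hproj p hpC)
  have hstep : ‖A y - A w‖ ^ 2 ≤ c ^ 2 / lam' ^ 2 * ‖w - y‖ ^ 2 := by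
    rw [norm_sub_rev]
    exact sq_le_of_mul_le_mul hlam' (norm_nonneg _) hstepsize
  have hwp : ‖w - p‖ ^ 2 = ‖w - y‖ ^ 2 + 2 * ⟪w - y, y - p⟫ + ‖y - p‖ ^ 2 := by
    rw [← norm_add_sq_real, sub_add_sub_cancel]
  rw [norm_sub_smul_sub_sq, inner_sub_left, hwp]
  have hstrong' := mul_le_mul_of_nonneg_left hstrong (by positivity : (0 : ℝ) ≤ 2 * lam)
  have hstep' := mul_le_mul_of_nonneg_left hstep (by positivity : (0 : ℝ) ≤ lam ^ 2)
  have hcoef : c ^ 2 * lam ^ 2 / lam' ^ 2 = lam ^ 2 * (c ^ 2 / lam' ^ 2) := by ring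
  rw [hcoef]
  linarith

/-- Proposition 3.1(ii): the one-step estimate for the projected Tseng point
when `A` is `r`-strongly pseudomonotone. -/
theorem stmt_12
    {H : Type*} [NormedAddCommGroup H] [InnerProductSpace ℝ H] [CompleteSpace H]
    (C : Set H) (hCne : C.Nonempty) (hCclosed : IsClosed C) (hCconv : Convex ℝ C)
    (A : H → H) (r : ℝ) (hr : 0 < r)
    (hAstrpseudo : ∀ x y : H, 0 ≤ ⟪A y, x - y⟫ → r * ‖x - y‖ ^ 2 ≤ ⟪A x, x - y⟫)
    (lam lam' c : ℝ) (hlam : 0 < lam) (hlam' : 0 < lam') (hc : 0 ≤ c)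
    (w y : H) (hyC : y ∈ C)
    (hproj : ∀ u ∈ C, ⟪w - lam • A w - y, u - y⟫ ≤ 0)
    (hstepsize : lam' * ‖A w - A y‖ ≤ c * ‖w - y‖) :
    ∀ p : H, p ∈ C → (∀ u ∈ C, 0 ≤ ⟪A p, u - p⟫) →
      ‖y - lam • (A y - A w) - p‖ ^ 2 ≤
        ‖w - p‖ ^ 2 - (1 - c ^ 2 * lam ^ 2 / lam' ^ 2) * ‖w - y‖ ^ 2
          - 2 * r * lam * ‖y - p‖ ^ 2 :=
  stmt_12_general C A r hAstrpseudo lam lam' c hlam hlam' w y hyC hproj hstepsize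
end

section
/- Let H be a real Hilbert space, L > 0, r > 0, and assume either (a) A : H → H is L-Lipschitz continuous and r-strongly monotone and B : H → 2^H is maximal monotone, or (b) A : H → H is L-Lipschitz continuous and monotone and B : H → 2^H is maximal monotone and r-strongly monotone. Assume Ω := {x ∈ H : −Ax ∈ Bx} ≠ ∅. Let μ ∈ (0,1), λ₁ > 0, pₙ ≥ 0 with ∑ pₙ < ∞, μₙ ≥ 0 with μₙ → 0, set λ̂ := min{μ/L, λ₁} and τ := 1 − (1/2)·min{1 − μ, 2λ̂r}, and assume τ ∈ (1/2, 1). Suppose the parameters satisfy: (c1) 0 ≤ βₙ ≤ β < (1/2)(1/τ − 1); (c2) 0 ≤ αₙ ≤ α < (1 − τ)/τ; (c3) max{(1 − β)/(1 + α − β), β/(1 + β − τ(1 + α))} < θ ≤ θₙ₋₁ ≤ θₙ ≤ (−1 − β + √((1 + β)² − 4(1/τ − 1 − 2β)(β − 1)))/(2(1/τ − 1 − 2β)) for all n. Let (xₙ), (wₙ), (zₙ), (yₙ), (λₙ) be generated by Algorithm 3.1. Then (xₙ) converges linearly to some p ∈ Ω: setting q := (1 + β) + θ(τ(1 + α) −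 (1 + β)), one has q ∈ (0, 1) and there exists a positive integer N such that for all n ≥ N, ‖xₙ₊₁ − p‖² ≤ q^{n−N}·(‖x_{N+1} − p‖² + σ_N‖x_{N+1} − x_N‖²), where σ_N := ((1 − θ_N)/θ_N)(1 − β). -/
open Filter
open scoped Topology RealInnerProductSpace Classical

/-!
Let `p` be a zero of `A + B`. Whichever of `A`, `B` is strongly monotone makes `A + B`
`r`-strongly monotone at `p`. The adaptive step sizes are bounded below by `λ̂` and converge,
so eventually `λₙ‖Awₙ - Ayₙ‖ ≤ √μ ‖wₙ - yₙ‖`; with these two facts the forward–backward–forward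
point `vₙ = yₙ - λₙ(Ayₙ - Awₙ)` satisfies `‖vₙ - p‖² ≤ τ‖wₙ - p‖²`. Expanding the relaxed inertial
update `xₙ₊₁ = (1 - θₙ)zₙ + θₙvₙ` then gives `Γₙ₊₁ ≤ q Γₙ` for
`Γₙ = ‖xₙ₊₁ - p‖² + σₙ‖xₙ₊₁ - xₙ‖²`: conditions (c1)–(c3) are exactly what bounds the two
resulting coefficients by `q` and `q σₙ`. Iterating gives the geometric rate.
-/

/-- The positive root of `(1/τ - 1 - 2β) t² + (1 + β) t + (β - 1)`. -/
noncomputable def thetaBound (τ β : ℝ) : ℝ :=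
  (-1 - β + Real.sqrt ((1 + β) ^ 2 - 4 * (1 / τ - 1 - 2 * β) * (β - 1))) /
    (2 * (1 / τ - 1 - 2 * β))

def linearRate (τ α β θ : ℝ) : ℝ := (1 + β) + θ * (τ * (1 + α) - (1 + β))

theorem quadratic_nonpos_of_le_root {s b t : ℝ} (hs : 0 < s) (hb : -1 ≤ b) (hb1 : b ≤ 1)
    (ht : 0 ≤ t) (htR : t ≤ (-1 - b + Real.sqrt ((1 + b) ^ 2 - 4 * s * (b - 1))) / (2 * s)) :
    s * t ^ 2 + (1 + b) * t + (b - 1) ≤ 0 := by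
  have hD : 0 ≤ (1 + b) ^ 2 - 4 * s * (b - 1) := by nlinarith
  have hle : 2 * s * t + (1 + b) ≤ Real.sqrt ((1 + b) ^ 2 - 4 * s * (b - 1)) := by
    rw [le_div_iff₀ (by positivity)] at htR
    linarith
  have hsq := (Real.le_sqrt (by nlinarith [mul_nonneg hs.le ht]) hD).1 hle
  nlinarith

theorem le_pow_sub_mul_of_le_mul {u : ℕ → ℝ} {c : ℝ} (hc : 0 ≤ c) {N : ℕ}
    (h : ∀ n, N ≤ n → u (n + 1) ≤ c * u n) {n : ℕ} (hn : N ≤ n) : u n ≤ c ^ (n - N) * u N := by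
  have := le_geom (u := fun k => u (N + k)) hc (n - N) fun k _ => h (N + k) (Nat.le_add_right _ _)
  simpa [Nat.add_sub_cancel' hn] using this

/-- The constraints of (c1)–(c3) on the bounds `α`, `β`, `θ`, together with `τ ∈ (1/2, 1)`. -/
structure RateConditions (τ α β θ : ℝ) : Prop where
  half_lt : 1 / 2 < τ
  lt_one : τ < 1
  β_nonneg : 0 ≤ β
  β_lt : β < 1 / 2 * (1 / τ - 1)
  α_nonneg : 0 ≤ α
  α_lt : α < (1 - τ) / τ
  θ_gt : max ((1 - β) / (1 + α - β)) (β / (1 + β - τ * (1 + α))) < θ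

namespace RateConditions

variable {τ α β θ t : ℝ} (h : RateConditions τ α β θ)
include h

theorem τ_pos : 0 < τ := by linarith [h.half_lt]

theorem one_lt_inv : 1 < 1 / τ := by
  rw [lt_div_iff₀ h.τ_pos]; linarith [h.lt_one]

theorem inv_lt_two : 1 / τ < 2 := by
  rw [div_lt_iff₀ h.τ_pos]; linarith [h.half_lt]

theorem β_lt_half : β < 1 / 2 := by linarith [h.β_lt, h.inv_lt_two]

theorem α_lt_inv_sub_one : α < 1 / τ - 1 := by
  have := h.α_lt
  rwa [sub_div, div_self h.τ_pos.ne'] at this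

theorem τ_mul_lt_one : τ * (1 + α) < 1 := by
  have := mul_lt_mul_of_pos_left h.α_lt h.τ_pos
  rw [mul_div_cancel₀ _ h.τ_pos.ne'] at this
  linarith

theorem one_sub_β_lt : 1 - β < θ * (1 + α - β) := by
  have := (max_lt_iff.1 h.θ_gt).1
  rwa [div_lt_iff₀ (by linarith [h.α_nonneg, h.β_lt_half])] at this

theorem β_lt_mul : β < θ * (1 + β - τ * (1 + α)) := by
  have := (max_lt_iff.1 h.θ_gt).2
  rwa [div_lt_iff₀ (by linarith [h.β_nonneg, h.τ_mul_lt_one])] at this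

theorem θ_pos : 0 < θ := by
  have := h.one_sub_β_lt
  by_contra! hθ
  nlinarith [h.α_nonneg, h.β_lt_half]

theorem quadratic_nonpos (ht : 0 ≤ t) (htR : t ≤ thetaBound τ β) :
    (1 / τ - 1 - 2 * β) * t ^ 2 + (1 + β) * t + (β - 1) ≤ 0 :=
  quadratic_nonpos_of_le_root (by linarith [h.β_lt]) (by linarith [h.β_nonneg])
    (by linarith [h.β_lt_half]) ht htR

theorem lt_one_of_le_thetaBound (ht : 0 ≤ t) (htR : t ≤ thetaBound τ β) : t < 1 := by
  have hq := h.quadratic_nonpos ht htR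
  by_contra! ht1
  have hs : 0 ≤ 1 / τ - 1 - 2 * β := by linarith [h.β_lt]
  nlinarith [mul_nonneg hs (by nlinarith : (0:ℝ) ≤ t ^ 2 - 1), h.one_lt_inv, h.β_nonneg]

theorem linearRate_lt_one : linearRate τ α β θ < 1 := by
  unfold linearRate; linarith [h.β_lt_mul]

theorem linearRate_pos (hθt : θ ≤ t) (htR : t ≤ thetaBound τ β) : 0 < linearRate τ α β θ := by
  have hθ1 : θ < 1 := hθt.trans_lt (h.lt_one_of_le_thetaBound (h.θ_pos.le.trans hθt) htR)
  unfold linearRate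
  nlinarith [h.θ_pos, h.β_nonneg, mul_pos h.τ_pos (by linarith [h.α_nonneg] : (0:ℝ) < 1 + α)]

theorem coeff_nonneg (hθt : θ ≤ t) (htR : t ≤ thetaBound τ β) : 0 ≤ (1 - t) / t * (1 - β) := by
  have ht := h.θ_pos.trans_le hθt
  have ht1 := h.lt_one_of_le_thetaBound ht.le htR
  exact mul_nonneg (div_nonneg (by linarith) ht.le) (by linarith [h.β_lt_half])

theorem coeff_le_linearRate (hθt : θ ≤ t) (ht1 : t ≤ 1) {a b : ℝ} (ha : a ≤ α) (hb : b ≤ β) :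
    (1 - t) * (1 + b) + t * τ * (1 + a) ≤ linearRate τ α β θ := by
  have hT : 0 ≤ 1 + β - τ * (1 + α) := by linarith [h.β_nonneg, h.τ_mul_lt_one]
  have ht := h.θ_pos.trans_le hθt
  unfold linearRate
  nlinarith [mul_nonneg (sub_nonneg.2 ht1) (sub_nonneg.2 hb),
    mul_nonneg (mul_nonneg ht.le h.τ_pos.le) (sub_nonneg.2 ha), mul_nonneg (sub_nonneg.2 hθt) hT]

/-- `t` times the slack in `coeff_mul_le_linearRate`; it splits into three nonnegative terms,
given by the constraints on `θ`, on `t` and on `α`. -/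
theorem coeff_poly_nonneg (hθt : θ ≤ t)
    (hq : (1 / τ - 1 - 2 * β) * t ^ 2 + (1 + β) * t + (β - 1) ≤ 0) :
    0 ≤ ((1 + β) - t * (1 + β - τ * (1 + α))) * (1 - t) * (1 - β) - t * (1 - t) * β * (1 + β)
      - t ^ 2 * τ * α * (1 + α) - (1 - t) * β * (1 - β) := by
  have ht := h.θ_pos.trans_le hθt
  have h1 : 0 ≤ t * (1 + α - β) - (1 - β) := by
    nlinarith [h.one_sub_β_lt, h.α_nonneg, h.β_lt_half]
  have key : ((1 + β) - t * (1 + β - τ * (1 + α))) * (1 - t) * (1 - β) - t * (1 - t) * β * (1 + β)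
      - t ^ 2 * τ * α * (1 + α) - (1 - t) * β * (1 - β)
      = (1 - τ * (1 + α)) * t * (t * (1 + α - β) - (1 - β))
        - ((1 / τ - 1 - 2 * β) * t ^ 2 + (1 + β) * t + (β - 1))
        + t ^ 2 * (1 / τ - 1 - α) := by ring
  rw [key]
  have := mul_nonneg (mul_nonneg (sub_nonneg.2 h.τ_mul_lt_one.le) ht.le) h1
  nlinarith [mul_nonneg (sq_nonneg t) (sub_nonneg.2 h.α_lt_inv_sub_one.le)]

theorem coeff_mul_le_linearRate {t' a b : ℝ} (hθt' : θ ≤ t') (ht't : t' ≤ t)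
    (htR : t ≤ thetaBound τ β) (ha : 0 ≤ a ∧ a ≤ α) (hb : 0 ≤ b ∧ b ≤ β) :
    (1 - t) * b * (1 + b) + t * τ * a * (1 + a) + (1 - t) / t * β * (1 - β)
      ≤ linearRate τ α β θ * ((1 - t') / t' * (1 - β)) := by
  have ht' := h.θ_pos.trans_le hθt'
  have ht := ht'.trans_le ht't
  have ht1 := h.lt_one_of_le_thetaBound ht.le htR
  have hpoly := h.coeff_poly_nonneg (hθt'.trans ht't) (h.quadratic_nonpos ht.le htR)
  have hT : 0 ≤ 1 + β - τ * (1 + α) := by linarith [h.β_nonneg, h.τ_mul_lt_one]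
  have hrate := h.linearRate_pos (hθt'.trans ht't) htR
  calc (1 - t) * b * (1 + b) + t * τ * a * (1 + a) + (1 - t) / t * β * (1 - β)
      ≤ (1 - t) * β * (1 + β) + t * τ * α * (1 + α) + (1 - t) / t * β * (1 - β) := by
        have hb' : b * (1 + b) ≤ β * (1 + β) := by nlinarith
        have ha' : a * (1 + a) ≤ α * (1 + α) := by nlinarith
        nlinarith [mul_le_mul_of_nonneg_left hb' (by linarith : (0:ℝ) ≤ 1 - t),
          mul_le_mul_of_nonneg_left ha' (mul_pos ht h.τ_pos).le]
    _ ≤ ((1 + β) - t * (1 + β - τ * (1 + α))) * ((1 - t) / t * (1 - β)) := by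
        have hdiff : ((1 + β) - t * (1 + β - τ * (1 + α))) * ((1 - t) / t * (1 - β))
            - ((1 - t) * β * (1 + β) + t * τ * α * (1 + α) + (1 - t) / t * β * (1 - β))
            = (((1 + β) - t * (1 + β - τ * (1 + α))) * (1 - t) * (1 - β)
              - t * (1 - t) * β * (1 + β) - t ^ 2 * τ * α * (1 + α)
              - (1 - t) * β * (1 - β)) / t := by
          field_simp
          ring
        linarith [div_nonneg hpoly ht.le]
    _ ≤ linearRate τ α β θ * ((1 - t) / t * (1 - β)) := by
        refine mul_le_mul_of_nonneg_right ?_ (h.coeff_nonneg (hθt'.trans ht't) htR)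
        unfold linearRate
        nlinarith [mul_nonneg (sub_nonneg.2 (hθt'.trans ht't)) hT]
    _ ≤ linearRate τ α β θ * ((1 - t') / t' * (1 - β)) := by
        rw [sub_div, sub_div, div_self ht.ne', div_self ht'.ne']
        have : 0 ≤ 1 - β := by linarith [h.β_lt_half]
        gcongr

end RateConditions

section InnerProductSpace

variable {H : Type*} [NormedAddCommGroup H] [InnerProductSpace ℝ H]

theorem norm_smul_add_smul_sq (s t : ℝ) (u v : H) :
    ‖s • u + t • v‖ ^ 2 = s ^ 2 * ‖u‖ ^ 2 + 2 * s * t * ⟪u, v⟫ + t ^ 2 * ‖v‖ ^ 2 := by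
  rw [norm_add_sq_real, real_inner_smul_left, real_inner_smul_right, norm_smul, norm_smul,
    mul_pow, mul_pow, Real.norm_eq_abs, Real.norm_eq_abs, sq_abs, sq_abs]
  ring

theorem norm_one_sub_smul_add_smul_sub_sq (t : ℝ) (a b c : H) :
    ‖(1 - t) • a + t • b - c‖ ^ 2
      = (1 - t) * ‖a - c‖ ^ 2 + t * ‖b - c‖ ^ 2 - t * (1 - t) * ‖a - b‖ ^ 2 := by
  rw [show (1 - t) • a + t • b - c = (1 - t) • (a - c) + t • (b - c) by module,
    show a - b = (1 : ℝ) • (a - c) + (-1 : ℝ) • (b - c) by module,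
    norm_smul_add_smul_sq, norm_smul_add_smul_sq]
  ring

theorem norm_add_smul_sub_sub_sq_le {b : ℝ} (hb : 0 ≤ b) (x x' p : H) :
    ‖x + b • (x - x') - p‖ ^ 2 ≤ (1 + b) * ‖x - p‖ ^ 2 + b * (1 + b) * ‖x - x'‖ ^ 2 := by
  have h := norm_one_sub_smul_add_smul_sub_sq (-b) x x' p
  rw [show (1 - -b) • x + -b • x' = x + b • (x - x') by module] at h
  nlinarith [mul_nonneg hb (sq_nonneg ‖x' - p‖)]

/-- The identity behind it is
`‖u - b • v‖² - (1 - β)‖u‖² + β(1 - β)‖v‖² = b‖u - v‖² + (β - b)(‖u‖² + (1 - β - b)‖v‖²)`. -/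
theorem sub_mul_le_norm_sub_smul_sq {b β : ℝ} (hb : 0 ≤ b) (hbβ : b ≤ β) (hβ : b + β ≤ 1)
    (u v : H) : (1 - β) * ‖u‖ ^ 2 - β * (1 - β) * ‖v‖ ^ 2 ≤ ‖u - b • v‖ ^ 2 := by
  have h1 := norm_sub_sq_real u (b • v)
  have h2 := norm_sub_sq_real u v
  rw [real_inner_smul_right, norm_smul, mul_pow, Real.norm_eq_abs, sq_abs] at h1
  nlinarith [mul_nonneg hb (sq_nonneg ‖u - v‖), mul_nonneg (sub_nonneg.2 hbβ)
    (add_nonneg (sq_nonneg ‖u‖) (mul_nonneg (by linarith : 0 ≤ 1 - β - b) (sq_nonneg ‖v‖)))]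

theorem norm_relaxed_inertial_step_le {a b t β τ : ℝ} (ha : 0 ≤ a) (hb : 0 ≤ b) (hbβ : b ≤ β)
    (hβ : b + β ≤ 1) (ht0 : 0 < t) (ht1 : t ≤ 1) (hτ : 0 ≤ τ) {x x' v p : H}
    (hv : ‖v - p‖ ^ 2 ≤ τ * ‖x + a • (x - x') - p‖ ^ 2) :
    ‖(1 - t) • (x + b • (x - x')) + t • v - p‖ ^ 2
        + (1 - t) / t * (1 - β) * ‖(1 - t) • (x + b • (x - x')) + t • v - x‖ ^ 2
      ≤ ((1 - t) * (1 + b) + t * τ * (1 + a)) * ‖x - p‖ ^ 2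
        + ((1 - t) * b * (1 + b) + t * τ * a * (1 + a) + (1 - t) / t * β * (1 - β))
          * ‖x - x'‖ ^ 2 := by
  set z := x + b • (x - x')
  set xn := (1 - t) • z + t • v
  have hxn := norm_one_sub_smul_add_smul_sub_sq t z v p
  have hzv : t * (1 - t) * ‖z - v‖ ^ 2 = (1 - t) / t * ‖xn - z‖ ^ 2 := by
    rw [show xn - z = t • (v - z) by module, norm_smul, mul_pow, Real.norm_eq_abs, sq_abs,
      norm_sub_rev]
    field_simp
  have hxnz : (1 - β) * ‖xn - x‖ ^ 2 - β * (1 - β) * ‖x - x'‖ ^ 2 ≤ ‖xn - z‖ ^ 2 := by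
    rw [show xn - z = (xn - x) - b • (x - x') by module]
    exact sub_mul_le_norm_sub_smul_sq hb hbβ hβ _ _
  have hs : 0 ≤ (1 - t) / t := div_nonneg (by linarith) ht0.le
  nlinarith [mul_le_mul_of_nonneg_left hxnz hs,
    mul_le_mul_of_nonneg_left (norm_add_smul_sub_sub_sq_le hb x x' p) (by linarith : 0 ≤ 1 - t),
    mul_le_mul_of_nonneg_left
      (hv.trans (mul_le_mul_of_nonneg_left (norm_add_smul_sub_sub_sq_le ha x x' p) hτ)) ht0.le]

theorem norm_fbf_sub_sq_le {A : H → H} {r μ lam : ℝ} {w y p : H} (hlam : 0 < lam)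
    (hmono : r * ‖y - p‖ ^ 2 ≤ ⟪(1 / lam) • (w - y - lam • A w) + A y, y - p⟫)
    (hsq : (lam * ‖A w - A y‖) ^ 2 ≤ μ * ‖w - y‖ ^ 2) :
    ‖y - lam • (A y - A w) - p‖ ^ 2
      ≤ ‖w - p‖ ^ 2 - (1 - μ) * ‖w - y‖ ^ 2 - 2 * lam * r * ‖y - p‖ ^ 2 := by
  have hres : lam • ((1 / lam) • (w - y - lam • A w) + A y) = (w - y) + lam • (A y - A w) := by
    rw [smul_add, smul_smul, mul_one_div_cancel hlam.ne', one_smul]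
    module
  have hinner : lam * ⟪(1 / lam) • (w - y - lam • A w) + A y, y - p⟫
      = ⟪w - y, y - p⟫ + lam * ⟪A y - A w, y - p⟫ := by
    rw [← real_inner_smul_left, hres, inner_add_left, real_inner_smul_left]
  have hv := norm_smul_add_smul_sq 1 (-lam) (y - p) (A y - A w)
  have hw := norm_add_sq_real (w - y) (y - p)
  rw [show (1 : ℝ) • (y - p) + (-lam) • (A y - A w) = y - lam • (A y - A w) - p by module,
    real_inner_comm] at hv
  rw [show w - y + (y - p) = w - p by abel] at hw
  rw [mul_pow, norm_sub_rev] at hsq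
  nlinarith [mul_le_mul_of_nonneg_left hmono hlam.le]

theorem norm_fbf_sub_sq_le_mul {A : H → H} {r μ lam lam₀ : ℝ} {w y p : H} (hr : 0 ≤ r)
    (hμ : μ ≤ 1) (hlam₀ : 0 < lam₀) (hlam : lam₀ ≤ lam)
    (hmono : r * ‖y - p‖ ^ 2 ≤ ⟪(1 / lam) • (w - y - lam • A w) + A y, y - p⟫)
    (hsq : (lam * ‖A w - A y‖) ^ 2 ≤ μ * ‖w - y‖ ^ 2) :
    ‖y - lam • (A y - A w) - p‖ ^ 2
      ≤ (1 - 1 / 2 * min (1 - μ) (2 * lam₀ * r)) * ‖w - p‖ ^ 2 := by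
  have hfbf := norm_fbf_sub_sq_le (hlam₀.trans_le hlam) hmono hsq
  have hwp : ‖w - p‖ ^ 2 ≤ 2 * (‖w - y‖ ^ 2 + ‖y - p‖ ^ 2) := by
    calc ‖w - p‖ ^ 2 ≤ (‖w - y‖ + ‖y - p‖) ^ 2 :=
          pow_le_pow_left₀ (norm_nonneg _) (norm_sub_le_norm_sub_add_norm_sub w y p) 2
      _ ≤ _ := add_sq_le
  set m := min (1 - μ) (2 * lam₀ * r)
  have hm0 : 0 ≤ m := le_min (by linarith) (by positivity)
  have hm1 : m ≤ 1 - μ := min_le_left _ _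
  have hm2 : m ≤ 2 * lam * r := (min_le_right _ _).trans (by gcongr)
  nlinarith [mul_le_mul_of_nonneg_left hwp hm0, mul_le_mul_of_nonneg_right hm1 (sq_nonneg ‖w - y‖),
    mul_le_mul_of_nonneg_right hm2 (sq_nonneg ‖y - p‖)]

end InnerProductSpace

section Stepsize

variable {H : Type*} [NormedAddCommGroup H]

theorem exists_tendsto_of_le_add_of_summable {a p : ℕ → ℝ} (ha : BddBelow (Set.range a))
    (hp : ∀ n, 0 ≤ p n) (hps : Summable p) (hap : ∀ n, a (n + 1) ≤ a n + p n) :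
    ∃ l, Tendsto a atTop (𝓝 l) := by
  set c : ℕ → ℝ := fun n => a n - ∑ i ∈ Finset.range n, p i
  have hc : Antitone c := antitone_nat_of_succ_le fun n => by
    simp only [c, Finset.sum_range_succ]
    linarith [hap n]
  have hcb : BddBelow (Set.range c) := by
    obtain ⟨m, hm⟩ := ha
    refine ⟨m - ∑' i, p i, ?_⟩
    rintro _ ⟨n, rfl⟩
    linarith [hm ⟨n, rfl⟩, hps.sum_le_tsum (Finset.range n) fun i _ => hp i]
  refine ⟨_, ((tendsto_atTop_ciInf hc hcb).add hps.hasSum.tendsto_sum_nat).congr fun n => ?_⟩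
  simp [c]

def IsAdaptiveStepsize (A : H → H) (μ : ℝ) (μ' p lam : ℕ → ℝ) (w y : ℕ → H) : Prop :=
  ∀ n, 1 ≤ n → lam (n + 1) =
    if A (w n) = A (y n) then lam n + p n
    else min ((μ + μ' n) * ‖w n - y n‖ / ‖A (w n) - A (y n)‖) (lam n + p n)

namespace IsAdaptiveStepsize

variable {A : H → H} {L μ : ℝ} {μ' p lam : ℕ → ℝ} {w y : ℕ → H}
  (h : IsAdaptiveStepsize A μ μ' p lam w y)
include h

theorem le_add {n : ℕ} (hn : 1 ≤ n) : lam (n + 1) ≤ lam n + p n := by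
  rw [h n hn]
  split_ifs
  exacts [le_rfl, min_le_right _ _]

theorem mul_norm_le {n : ℕ} (hn : 1 ≤ n) (hμn : 0 ≤ μ + μ' n) :
    lam (n + 1) * ‖A (w n) - A (y n)‖ ≤ (μ + μ' n) * ‖w n - y n‖ := by
  rw [h n hn]
  split_ifs with hA
  · rw [hA, sub_self, norm_zero, mul_zero]
    positivity
  · have hApos : 0 < ‖A (w n) - A (y n)‖ := norm_pos_iff.2 (sub_ne_zero.2 hA)
    calc _ ≤ (μ + μ' n) * ‖w n - y n‖ / ‖A (w n) - A (y n)‖ * ‖A (w n) - A (y n)‖ := by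
          gcongr
          exact min_le_left _ _
      _ = _ := div_mul_cancel₀ _ hApos.ne'

theorem min_le (hLip : ∀ a b, ‖A a - A b‖ ≤ L * ‖a - b‖) (hL : 0 < L) (hμ : 0 ≤ μ)
    (hp : ∀ n, 1 ≤ n → 0 ≤ p n) (hμ' : ∀ n, 1 ≤ n → 0 ≤ μ' n) :
    ∀ n, 1 ≤ n → min (μ / L) (lam 1) ≤ lam n := by
  intro n hn
  induction n, hn using Nat.le_induction with
  | base => exact min_le_right _ _
  | succ n hn ih =>
    rw [h n hn]
    split_ifs with hA
    · linarith [hp n hn]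
    refine le_min ((min_le_left _ _).trans ?_) (by linarith [hp n hn])
    rw [le_div_iff₀ (norm_pos_iff.2 (sub_ne_zero.2 hA))]
    calc μ / L * ‖A (w n) - A (y n)‖ ≤ μ / L * (L * ‖w n - y n‖) := by
          gcongr
          exact hLip _ _
      _ = μ * ‖w n - y n‖ := by field_simp
      _ ≤ (μ + μ' n) * ‖w n - y n‖ := by
          gcongr
          linarith [hμ' n hn]

theorem exists_tendsto {lam₀ : ℝ} (hlow : ∀ n, 1 ≤ n → lam₀ ≤ lam n)
    (hp : ∀ n, 1 ≤ n → 0 ≤ p n) (hps : Summable p) :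
    ∃ l, lam₀ ≤ l ∧ Tendsto lam atTop (𝓝 l) := by
  obtain ⟨l, hl⟩ := exists_tendsto_of_le_add_of_summable (a := fun n => lam (n + 1))
    ⟨lam₀, by rintro _ ⟨n, rfl⟩; exact hlow _ n.succ_pos⟩ (fun n => hp _ n.succ_pos)
    ((summable_nat_add_iff 1).2 hps) (fun n => h.le_add n.succ_pos)
  exact ⟨l, ge_of_tendsto hl (.of_forall fun n => hlow _ n.succ_pos),
    (tendsto_add_atTop_iff_nat 1).1 hl⟩

/-- Since `λₙ₊₁ / λₙ → 1` and `μ + μ'ₙ → μ < √μ`, eventually `λₙ (μ + μ'ₙ) ≤ √μ λₙ₊₁`. -/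
theorem eventually_sq_mul_norm_le (hLip : ∀ a b, ‖A a - A b‖ ≤ L * ‖a - b‖) (hL : 0 < L)
    (hμ : μ ∈ Set.Ioo 0 1) (hlam1 : 0 < lam 1) (hp : ∀ n, 1 ≤ n → 0 ≤ p n) (hps : Summable p)
    (hμ' : ∀ n, 1 ≤ n → 0 ≤ μ' n) (hμ'lim : Tendsto μ' atTop (𝓝 0)) :
    ∃ N, 1 ≤ N ∧ ∀ n, N ≤ n → (lam n * ‖A (w n) - A (y n)‖) ^ 2 ≤ μ * ‖w n - y n‖ ^ 2 := by
  have hlow := h.min_le hLip hL hμ.1.le hp hμ'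
  have hlam₀ : 0 < min (μ / L) (lam 1) := lt_min (div_pos hμ.1 hL) hlam1
  obtain ⟨l, hl0, hl⟩ := h.exists_tendsto hlow hp hps
  have hμsqrt : μ < √μ := by
    rw [Real.lt_sqrt hμ.1.le]
    nlinarith [hμ.1, hμ.2]
  have hlim : Tendsto (fun n => √μ * lam (n + 1) - lam n * (μ + μ' n)) atTop
      (𝓝 (√μ * l - l * (μ + 0))) :=
    (tendsto_const_nhds.mul (hl.comp (tendsto_add_atTop_nat 1))).sub
      (hl.mul (tendsto_const_nhds.add hμ'lim))
  obtain ⟨N, hN⟩ := eventually_atTop.1 (hlim.eventually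
    (eventually_gt_nhds (show (0 : ℝ) < √μ * l - l * (μ + 0) by nlinarith)))
  refine ⟨max N 1, le_max_right _ _, fun n hn => ?_⟩
  have hn1 : 1 ≤ n := (le_max_right _ _).trans hn
  have hlamn := hlam₀.trans_le (hlow n hn1)
  have hlamn1 := hlam₀.trans_le (hlow (n + 1) (by omega))
  have hle : lam n * ‖A (w n) - A (y n)‖ ≤ √μ * ‖w n - y n‖ := by
    refine le_of_mul_le_mul_right ?_ hlamn1
    calc lam n * ‖A (w n) - A (y n)‖ * lam (n + 1)
        = lam n * (lam (n + 1) * ‖A (w n) - A (y n)‖) := by ring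
      _ ≤ lam n * ((μ + μ' n) * ‖w n - y n‖) :=
          mul_le_mul_of_nonneg_left (h.mul_norm_le hn1 (by linarith [hμ.1, hμ' n hn1])) hlamn.le
      _ ≤ √μ * lam (n + 1) * ‖w n - y n‖ := by
          rw [← mul_assoc]
          exact mul_le_mul_of_nonneg_right (by linarith [hN n ((le_max_left _ _).trans hn)])
            (norm_nonneg _)
      _ = √μ * ‖w n - y n‖ * lam (n + 1) := by ring
  calc (lam n * ‖A (w n) - A (y n)‖) ^ 2 ≤ (√μ * ‖w n - y n‖) ^ 2 := by gcongr
    _ = μ * ‖w n - y n‖ ^ 2 := by rw [mul_pow, Real.sq_sqrt hμ.1.le]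

end IsAdaptiveStepsize

end Stepsize

section Algorithm

variable {H : Type*} [NormedAddCommGroup H] [InnerProductSpace ℝ H]

theorem mul_norm_sq_le_inner_add_of_neg_mem {A : H → H} {B : H → Set H} {rA rB : ℝ}
    (hA : ∀ x y, rA * ‖x - y‖ ^ 2 ≤ ⟪A x - A y, x - y⟫)
    (hB : ∀ x y u v, u ∈ B x → v ∈ B y → rB * ‖x - y‖ ^ 2 ≤ ⟪u - v, x - y⟫)
    {x y u : H} (hu : u ∈ B x) (hy : -A y ∈ B y) :
    (rA + rB) * ‖x - y‖ ^ 2 ≤ ⟪u + A x, x - y⟫ := by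
  rw [show u + A x = (A x - A y) + (u - -A y) by abel, inner_add_left]
  linarith [hA x y, hB x y u _ hu hy]

theorem RateConditions.lyapunov_succ_le {τ α β θ : ℝ} (h : RateConditions τ α β θ)
    {alpha beta theta : ℕ → ℝ} {x w z v : ℕ → H} {p : H}
    (hα : ∀ n, 1 ≤ n → 0 ≤ alpha n ∧ alpha n ≤ α) (hβ : ∀ n, 1 ≤ n → 0 ≤ beta n ∧ beta n ≤ β)
    (hθ : ∀ n, 1 ≤ n → θ ≤ theta n ∧ theta n ≤ theta (n + 1) ∧ theta n ≤ thetaBound τ β)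
    (hw : ∀ n, 1 ≤ n → w n = x n + alpha n • (x n - x (n - 1)))
    (hz : ∀ n, 1 ≤ n → z n = x n + beta n • (x n - x (n - 1)))
    (hx : ∀ n, 1 ≤ n → x (n + 1) = (1 - theta n) • z n + theta n • v n)
    {n : ℕ} (hn : 1 ≤ n) (hv : ‖v (n + 1) - p‖ ^ 2 ≤ τ * ‖w (n + 1) - p‖ ^ 2) :
    ‖x (n + 1 + 1) - p‖ ^ 2
        + (1 - theta (n + 1)) / theta (n + 1) * (1 - β) * ‖x (n + 1 + 1) - x (n + 1)‖ ^ 2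
      ≤ linearRate τ α β θ * (‖x (n + 1) - p‖ ^ 2
        + (1 - theta n) / theta n * (1 - β) * ‖x (n + 1) - x n‖ ^ 2) := by
  obtain ⟨hθt, -, hθR⟩ := hθ (n + 1) (by omega)
  obtain ⟨hθn, hθmono, -⟩ := hθ n hn
  obtain ⟨ha0, ha⟩ := hα (n + 1) (by omega)
  obtain ⟨hb0, hb⟩ := hβ (n + 1) (by omega)
  have ht := h.θ_pos.trans_le hθt
  have ht1 := h.lt_one_of_le_thetaBound ht.le hθR
  have hw' := hw (n + 1) (by omega)
  have hz' := hz (n + 1) (by omega)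
  simp only [Nat.add_sub_cancel] at hw' hz'
  have hstep := norm_relaxed_inertial_step_le ha0 hb0 hb (by linarith [h.β_lt_half]) ht ht1.le
    h.τ_pos.le (hw' ▸ hv)
  rw [← hz', ← hx (n + 1) (by omega)] at hstep
  refine hstep.trans (le_of_le_of_eq (add_le_add
    (mul_le_mul_of_nonneg_right (h.coeff_le_linearRate hθt ht1.le ha hb) (sq_nonneg _))
    (mul_le_mul_of_nonneg_right
      (h.coeff_mul_le_linearRate hθn hθmono hθR ⟨ha0, ha⟩ ⟨hb0, hb⟩) (sq_nonneg _)))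
    (by ring))

end Algorithm

theorem stmt_17_general
    {H : Type*} [NormedAddCommGroup H] [InnerProductSpace ℝ H]
    (L r : ℝ) (hL : 0 < L) (hr : 0 < r)
    (A : H → H) (B : H → Set H)
    (hcase :
      ((∀ x y : H, ‖A x - A y‖ ≤ L * ‖x - y‖) ∧
       (∀ x y : H, r * ‖x - y‖ ^ 2 ≤ ⟪A x - A y, x - y⟫) ∧
       (∀ x y u v : H, u ∈ B x → v ∈ B y → 0 ≤ ⟪u - v, x - y⟫) ∧
       (∀ x u : H, (∀ y v : H, v ∈ B y → 0 ≤ ⟪u - v, x - y⟫) → u ∈ B x)) ∨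
      ((∀ x y : H, ‖A x - A y‖ ≤ L * ‖x - y‖) ∧
       (∀ x y : H, 0 ≤ ⟪A x - A y, x - y⟫) ∧
       (∀ x y u v : H, u ∈ B x → v ∈ B y → r * ‖x - y‖ ^ 2 ≤ ⟪u - v, x - y⟫) ∧
       (∀ x u : H, (∀ y v : H, v ∈ B y → 0 ≤ ⟪u - v, x - y⟫) → u ∈ B x)))
    (hΩ : ∃ q : H, -A q ∈ B q)
    (μ : ℝ) (hμ : μ ∈ Set.Ioo (0 : ℝ) 1)
    (alpha beta theta p μ' lam : ℕ → ℝ)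
    (hlam1 : 0 < lam 1)
    (hp : ∀ n, 1 ≤ n → 0 ≤ p n) (hpsum : Summable p)
    (hμ' : ∀ n, 1 ≤ n → 0 ≤ μ' n) (hμ'lim : Tendsto μ' atTop (𝓝 0))
    (lamhat τ : ℝ)
    (hlamhat : lamhat = min (μ / L) (lam 1))
    (hτdef : τ = 1 - (1 / 2) * min (1 - μ) (2 * lamhat * r))
    (hτ : τ ∈ Set.Ioo (1 / 2 : ℝ) 1)
    (α β θ : ℝ)
    (hc1 : (∀ n, 1 ≤ n → 0 ≤ beta n ∧ beta n ≤ β) ∧ β < (1 / 2) * (1 / τ - 1))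
    (hc2 : (∀ n, 1 ≤ n → 0 ≤ alpha n ∧ alpha n ≤ α) ∧ α < (1 - τ) / τ)
    (hc3 : max ((1 - β) / (1 + α - β)) (β / (1 + β - τ * (1 + α))) < θ ∧
      ∀ n, 1 ≤ n → θ ≤ theta n ∧ theta n ≤ theta (n + 1) ∧
        theta n ≤ (-1 - β + Real.sqrt ((1 + β) ^ 2
          - 4 * (1 / τ - 1 - 2 * β) * (β - 1))) / (2 * (1 / τ - 1 - 2 * β)))
    (x w z y : ℕ → H)
    (hw : ∀ n, 1 ≤ n → w n = x n + alpha n • (x n - x (n - 1)))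
    (hz : ∀ n, 1 ≤ n → z n = x n + beta n • (x n - x (n - 1)))
    (hy : ∀ n, 1 ≤ n → (1 / lam n) • (w n - y n - lam n • A (w n)) ∈ B (y n))
    (hx : ∀ n, 1 ≤ n →
      x (n + 1) = (1 - theta n) • z n + theta n • (y n - lam n • (A (y n) - A (w n))))
    (hstep : ∀ n, 1 ≤ n → lam (n + 1) =
      if A (w n) = A (y n) then lam n + p n
      else min ((μ + μ' n) * ‖w n - y n‖ / ‖A (w n) - A (y n)‖) (lam n + p n)) :
    ((0 : ℝ) < (1 + β) + θ * (τ * (1 + α) - (1 + β)) ∧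
      (1 + β) + θ * (τ * (1 + α) - (1 + β)) < 1) ∧
    ∃ q : H, -A q ∈ B q ∧ ∃ N : ℕ, 1 ≤ N ∧ ∀ n, N ≤ n →
      ‖x (n + 1) - q‖ ^ 2 ≤
        ((1 + β) + θ * (τ * (1 + α) - (1 + β))) ^ (n - N) *
          (‖x (N + 1) - q‖ ^ 2
            + ((1 - theta N) / theta N) * (1 - β) * ‖x (N + 1) - x N‖ ^ 2) := by
  obtain ⟨p₀, hp₀⟩ := hΩ
  have hP : RateConditions τ α β θ :=
    ⟨hτ.1, hτ.2, (hc1.1 1 le_rfl).1.trans (hc1.1 1 le_rfl).2, hc1.2,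
      (hc2.1 1 le_rfl).1.trans (hc2.1 1 le_rfl).2, hc2.2, hc3.1⟩
  have hLip : ∀ a b, ‖A a - A b‖ ≤ L * ‖a - b‖ := hcase.elim (·.1) (·.1)
  have hmono : ∀ v u, u ∈ B v → r * ‖v - p₀‖ ^ 2 ≤ ⟪u + A v, v - p₀⟫ := by
    intro v u hu
    rcases hcase with ⟨-, hA, hB, -⟩ | ⟨-, hA, hB, -⟩
    · simpa using mul_norm_sq_le_inner_add_of_neg_mem (rB := 0) hA (by simpa using hB) hu hp₀
    · simpa using mul_norm_sq_le_inner_add_of_neg_mem (rA := 0) (by simpa using hA) hB hu hp₀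
  have hstep' : IsAdaptiveStepsize A μ μ' p lam w y := hstep
  have hlow := hstep'.min_le hLip hL hμ.1.le hp hμ'
  obtain ⟨N, hN, hsq⟩ := hstep'.eventually_sq_mul_norm_le hLip hL hμ hlam1 hp hpsum hμ' hμ'lim
  have hcontr : ∀ n, N ≤ n →
      ‖y n - lam n • (A (y n) - A (w n)) - p₀‖ ^ 2 ≤ τ * ‖w n - p₀‖ ^ 2 := fun n hn => by
    rw [hτdef, hlamhat]
    exact norm_fbf_sub_sq_le_mul hr.le hμ.2.le (lt_min (div_pos hμ.1 hL) hlam1)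
      (hlow n (hN.trans hn)) (hmono _ _ (hy n (hN.trans hn))) (hsq n hn)
  have hrate := hP.linearRate_pos (hc3.2 1 le_rfl).1 (hc3.2 1 le_rfl).2.2
  refine ⟨⟨hrate, hP.linearRate_lt_one⟩, p₀, hp₀, N, hN, fun n hn => ?_⟩
  have hθn := hc3.2 n (hN.trans hn)
  refine (le_add_of_nonneg_right (mul_nonneg (hP.coeff_nonneg hθn.1 hθn.2.2) (sq_nonneg _))).trans
    (le_pow_sub_mul_of_le_mul hrate.le (u := fun n => ‖x (n + 1) - p₀‖ ^ 2
      + (1 - theta n) / theta n * (1 - β) * ‖x (n + 1) - x n‖ ^ 2) (fun m hm => ?_) hn)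
  exact hP.lyapunov_succ_le hc2.1 hc1.1 hc3.2 hw hz hx (hN.trans hm) (hcontr (m + 1) (by omega))

/-- Theorem 4.2: linear convergence rate of Algorithm 3.1 under Assumption 4.1. -/
theorem stmt_17
    {H : Type*} [NormedAddCommGroup H] [InnerProductSpace ℝ H] [CompleteSpace H]
    (L r : ℝ) (hL : 0 < L) (hr : 0 < r)
    (A : H → H) (B : H → Set H)
    (hcase :
      ((∀ x y : H, ‖A x - A y‖ ≤ L * ‖x - y‖) ∧
       (∀ x y : H, r * ‖x - y‖ ^ 2 ≤ ⟪A x - A y, x - y⟫) ∧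
       (∀ x y u v : H, u ∈ B x → v ∈ B y → 0 ≤ ⟪u - v, x - y⟫) ∧
       (∀ x u : H, (∀ y v : H, v ∈ B y → 0 ≤ ⟪u - v, x - y⟫) → u ∈ B x)) ∨
      ((∀ x y : H, ‖A x - A y‖ ≤ L * ‖x - y‖) ∧
       (∀ x y : H, 0 ≤ ⟪A x - A y, x - y⟫) ∧
       (∀ x y u v : H, u ∈ B x → v ∈ B y → r * ‖x - y‖ ^ 2 ≤ ⟪u - v, x - y⟫) ∧
       (∀ x u : H, (∀ y v : H, v ∈ B y → 0 ≤ ⟪u - v, x - y⟫) → u ∈ B x)))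
    (hΩ : ∃ q : H, -A q ∈ B q)
    (μ : ℝ) (hμ : μ ∈ Set.Ioo (0 : ℝ) 1)
    (alpha beta theta p μ' lam : ℕ → ℝ)
    (hlam1 : 0 < lam 1)
    (hp : ∀ n, 1 ≤ n → 0 ≤ p n) (hpsum : Summable p)
    (hμ' : ∀ n, 1 ≤ n → 0 ≤ μ' n) (hμ'lim : Tendsto μ' atTop (𝓝 0))
    (lamhat τ : ℝ)
    (hlamhat : lamhat = min (μ / L) (lam 1))
    (hτdef : τ = 1 - (1 / 2) * min (1 - μ) (2 * lamhat * r))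
    (hτ : τ ∈ Set.Ioo (1 / 2 : ℝ) 1)
    (α β θ : ℝ)
    (hc1 : (∀ n, 1 ≤ n → 0 ≤ beta n ∧ beta n ≤ β) ∧ β < (1 / 2) * (1 / τ - 1))
    (hc2 : (∀ n, 1 ≤ n → 0 ≤ alpha n ∧ alpha n ≤ α) ∧ α < (1 - τ) / τ)
    (hc3 : max ((1 - β) / (1 + α - β)) (β / (1 + β - τ * (1 + α))) < θ ∧
      ∀ n, 1 ≤ n → θ ≤ theta n ∧ theta n ≤ theta (n + 1) ∧
        theta n ≤ (-1 - β + Real.sqrt ((1 + β) ^ 2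
          - 4 * (1 / τ - 1 - 2 * β) * (β - 1))) / (2 * (1 / τ - 1 - 2 * β)))
    (x w z y : ℕ → H)
    (hw : ∀ n, 1 ≤ n → w n = x n + alpha n • (x n - x (n - 1)))
    (hz : ∀ n, 1 ≤ n → z n = x n + beta n • (x n - x (n - 1)))
    (hy : ∀ n, 1 ≤ n → (1 / lam n) • (w n - y n - lam n • A (w n)) ∈ B (y n))
    (hx : ∀ n, 1 ≤ n →
      x (n + 1) = (1 - theta n) • z n + theta n • (y n - lam n • (A (y n) - A (w n))))
    (hstep : ∀ n, 1 ≤ n → lam (n + 1) =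
      if A (w n) = A (y n) then lam n + p n
      else min ((μ + μ' n) * ‖w n - y n‖ / ‖A (w n) - A (y n)‖) (lam n + p n)) :
    ((0 : ℝ) < (1 + β) + θ * (τ * (1 + α) - (1 + β)) ∧
      (1 + β) + θ * (τ * (1 + α) - (1 + β)) < 1) ∧
    ∃ q : H, -A q ∈ B q ∧ ∃ N : ℕ, 1 ≤ N ∧ ∀ n, N ≤ n →
      ‖x (n + 1) - q‖ ^ 2 ≤
        ((1 + β) + θ * (τ * (1 + α) - (1 + β))) ^ (n - N) *
          (‖x (N + 1) - q‖ ^ 2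
            + ((1 - theta N) / theta N) * (1 - β) * ‖x (N + 1) - x N‖ ^ 2) :=
  stmt_17_general L r hL hr A B hcase hΩ μ hμ alpha beta theta p μ' lam hlam1 hp hpsum hμ' hμ'lim
    lamhat τ hlamhat hτdef hτ α β θ hc1 hc2 hc3 x w z y hw hz hy hx hstep
end
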